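/- arXiv:2304.07231 — 5 statements merged into one kernel-verified Lean document; each statement's English description precedes it below -/
import Mathlib

section
/- Every compact Hausdorff paratopological gyrogroup is a topological gyrogroup; that is, if (G, τ, ⊕) is a paratopological gyrogroup whose topology is compact and Hausdorff, then the inversion map x ↦ ⊖x is continuous. -/
/-- A gyrogroup: a groupoid with identity, inverses, gyroautomorphisms satisfying the
left gyroassociative law and the left loop property. -/
class Gyrogroup (G : Type*) extends Zero G, Add G, Neg G where
  gyr : G → G → G → G
  zero_add : ∀ x : G, 0 + x = x
  add_zero : ∀ x : G, x + 0 = x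
  neg_add_cancel : ∀ x : G, -x + x = 0
  add_neg_cancel : ∀ x : G, x + -x = 0
  gyr_bijective : ∀ x y : G, Function.Bijective (gyr x y)
  gyr_add : ∀ x y a b : G, gyr x y (a + b) = gyr x y a + gyr x y b
  add_gyr_assoc : ∀ x y z : G, x + (y + z) = (x + y) + gyr x y z
  gyr_left_loop : ∀ x y : G, gyr (x + y) y = gyr x y

open Gyrogroup

/-- `𝒰` is a neighborhood base at the point `x`. -/
def IsNhdsBasisAt {G : Type*} [TopologicalSpace G] (x : G) (𝒰 : Set (Set G)) : Prop :=
  (∀ U ∈ 𝒰, U ∈ nhds x) ∧ ∀ V ∈ nhds x, ∃ U ∈ 𝒰, U ⊆ V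

/-- Every member of `𝒰` is invariant under all gyroautomorphisms: this is the witness that
a paratopological gyrogroup is *strongly* paratopological when `𝒰` is a nbhd base at `0`. -/
def GyrInvariantBase {G : Type*} [Gyrogroup G] (𝒰 : Set (Set G)) : Prop :=
  ∀ U ∈ 𝒰, ∀ x y : G, gyr x y '' U = U

/-- General left cancellation in a gyrogroup. -/
theorem Gyrogroup.add_left_cancel' {G : Type*} [Gyrogroup G] {a b c : G}
    (h : a + b = a + c) : b = c := by
  have h2 : -a + (a + b) = -a + (a + c) := by rw [h]
  rw [add_gyr_assoc, add_gyr_assoc, neg_add_cancel, zero_add, zero_add] at h2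
  exact (gyr_bijective (-a) a).injective h2

/-- Uniqueness of right inverses. -/
theorem Gyrogroup.eq_neg_of_add_eq_zero {G : Type*} [Gyrogroup G] {a y : G}
    (h : a + y = 0) : y = -a :=
  Gyrogroup.add_left_cancel' (h.trans (add_neg_cancel a).symm)

/-- A compact Hausdorff paratopological gyrogroup is a topological
gyrogroup, i.e., the inversion map is continuous. -/
theorem compact_hausdorff_paratopological_gyrogroup_inv_continuous
    {G : Type*} [Gyrogroup G] [TopologicalSpace G] [CompactSpace G] [T2Space G]
    (hadd : Continuous fun p : G × G => p.1 + p.2) :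
    Continuous fun x : G => -x := by
  have hS : IsClosed {p : G × G | p.1 + p.2 = 0} :=
    isClosed_eq hadd continuous_const
  rw [continuous_iff_isClosed]
  intro C hC
  have key : (fun x : G => -x) ⁻¹' C =
      Prod.fst '' ({p : G × G | p.1 + p.2 = 0} ∩ Set.univ ×ˢ C) := by
    ext x
    constructor
    · intro hx
      exact ⟨(x, -x), ⟨add_neg_cancel x, ⟨trivial, hx⟩⟩, rfl⟩
    · rintro ⟨⟨a, b⟩, ⟨hab, -, hb⟩, rfl⟩
      rw [Set.mem_preimage, ← Gyrogroup.eq_neg_of_add_eq_zero hab]; exact hb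
  rw [key]
  exact isClosedMap_fst_of_compactSpace _ (hS.inter (isClosed_univ.prod hC))
end

section
/- Let G be a strongly paratopological gyrogroup and H an invariant subgyrogroup of G. If H (with the subspace topology) is a topological gyrogroup and the quotient space G/H of left cosets {a⊕H : a ∈ G}, endowed with the quotient topology induced by the map π : a ↦ a⊕H, is a topological gyrogroup, then G itself is a strongly topological gyrogroup (i.e., the inversion map of G is continuous). -/
open Gyrogroup

/-- The left coset `a ⊕ H`. -/
def leftAddCoset {G : Type*} [Gyrogroup G] (a : G) (H : Set G) : Set G :=
  (fun h => a + h) '' H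

/-- Two elements are identified iff they have the same left coset of `H`. -/
def cosetSetoid {G : Type*} [Gyrogroup G] (H : Set G) : Setoid G :=
  ⟨fun a b => leftAddCoset a H = leftAddCoset b H,
    ⟨fun _ => rfl, Eq.symm, Eq.trans⟩⟩

namespace GyroAux
variable {G : Type*} [Gyrogroup G]

lemma neg_add_add (a b : G) : -a + (a + b) = gyr 0 a b := by
  rw [add_gyr_assoc, Gyrogroup.neg_add_cancel, Gyrogroup.zero_add,
    ← Gyrogroup.gyr_left_loop (-a) a, Gyrogroup.neg_add_cancel]

lemma add_neg_add (a b : G) : a + (-a + b) = gyr 0 (-a) b := by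
  rw [add_gyr_assoc, Gyrogroup.add_neg_cancel, Gyrogroup.zero_add,
    ← Gyrogroup.gyr_left_loop a (-a), Gyrogroup.add_neg_cancel]

lemma add_left_inj (a : G) : Function.Injective (fun b => a + b) := by
  intro x y h
  have hx := neg_add_add a x
  have hy := neg_add_add a y
  simp only at h
  rw [h] at hx
  exact (gyr_bijective 0 a).injective (hx.symm.trans hy)

lemma gyr_zero_left (a z : G) : gyr 0 a z = z := by
  have h := add_gyr_assoc (0:G) a z
  rw [Gyrogroup.zero_add, Gyrogroup.zero_add] at h
  exact (add_left_inj a h.symm)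

lemma left_cancel (a b : G) : -a + (a + b) = b := by
  rw [neg_add_add, gyr_zero_left]

lemma left_cancel' (a b : G) : a + (-a + b) = b := by
  rw [add_neg_add, gyr_zero_left]

lemma eq_neg_of_add_eq_zero {a b : G} (h : a + b = 0) : b = -a := by
  have h2 := left_cancel a b
  rw [h, Gyrogroup.add_zero] at h2
  exact h2.symm

lemma gyro_neg_neg (a : G) : -(-a) = a :=
  (eq_neg_of_add_eq_zero (Gyrogroup.neg_add_cancel a)).symm

lemma gyro_neg_zero : -(0:G) = 0 := by
  have := eq_neg_of_add_eq_zero (Gyrogroup.add_zero (0:G))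
  exact this.symm

lemma gyr_zero (x y : G) : gyr x y 0 = 0 := by
  have h := gyr_add x y 0 0
  rw [Gyrogroup.add_zero] at h
  have h2 : gyr x y 0 + 0 = gyr x y 0 + gyr x y 0 := by
    rw [Gyrogroup.add_zero]; exact h
  exact (add_left_inj _ h2).symm

lemma gyr_neg (x y z : G) : gyr x y (-z) = -(gyr x y z) := by
  apply eq_neg_of_add_eq_zero
  rw [← gyr_add, Gyrogroup.add_neg_cancel, gyr_zero]

lemma gyro_neg_add_rev (a b : G) : -(a + b) = gyr a b (-b + -a) := by
  symm
  apply eq_neg_of_add_eq_zero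
  rw [← add_gyr_assoc, left_cancel', Gyrogroup.add_neg_cancel]

section Top
variable [TopologicalSpace G]

/-- Left translation as a homeomorphism. -/
def leftHomeo (hadd : Continuous fun p : G × G => p.1 + p.2) (a : G) : G ≃ₜ G where
  toFun := fun x => a + x
  invFun := fun x => -a + x
  left_inv := fun x => left_cancel a x
  right_inv := fun x => left_cancel' a x
  continuous_toFun := hadd.comp (continuous_const.prodMk continuous_id)
  continuous_invFun := hadd.comp (continuous_const.prodMk continuous_id)

lemma isOpenMap_left (hadd : Continuous fun p : G × G => p.1 + p.2) (a : G) : IsOpenMap (fun x : G => a + x) :=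
  (leftHomeo hadd a).isOpenMap

end Top
end GyroAux

open GyroAux

/-- If `G` is a strongly paratopological gyrogroup, `H` is an invariant
subgyrogroup of `G` such that `H` (with the subspace topology) is a topological gyrogroup,
and the quotient space `G/H` of left cosets (with the quotient topology) is a topological
gyrogroup (its induced addition and inversion are well defined and continuous),
then the inversion of `G` is continuous. -/



theorem strongly_paratopological_gyrogroup_of_invariant_subgyrogroup_quotient
    {G : Type*} [Gyrogroup G] [TopologicalSpace G]
    (hadd : Continuous fun p : G × G => p.1 + p.2)
    (𝒰 : Set (Set G)) (hbase : IsNhdsBasisAt (0 : G) 𝒰) (hstrong : GyrInvariantBase 𝒰)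
    (H : Set G) (hne : H.Nonempty)
    (hHadd : ∀ a ∈ H, ∀ b ∈ H, a + b ∈ H) (hHneg : ∀ a ∈ H, -a ∈ H)
    (hinv1 : ∀ a b : G, (fun n => a + (n + b)) '' H = (fun n => (a + b) + n) '' H)
    (hinv2 : ∀ a b : G, (fun n => (a + b) + n) '' H = (fun n => (a + n) + b) '' H)
    (hHnegCont : ContinuousOn (fun x : G => -x) H)
    (addQ : Quotient (cosetSetoid H) → Quotient (cosetSetoid H) → Quotient (cosetSetoid H))
    (haddQ : ∀ a b : G, addQ (Quotient.mk (cosetSetoid H) a) (Quotient.mk (cosetSetoid H) b)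
      = Quotient.mk (cosetSetoid H) (a + b))
    (haddQCont : Continuous fun p : Quotient (cosetSetoid H) × Quotient (cosetSetoid H) =>
      addQ p.1 p.2)
    (negQ : Quotient (cosetSetoid H) → Quotient (cosetSetoid H))
    (hnegQ : ∀ a : G, negQ (Quotient.mk (cosetSetoid H) a) = Quotient.mk (cosetSetoid H) (-a))
    (hnegQCont : Continuous negQ) :
    Continuous fun x : G => -x := by
  classical
  obtain ⟨h₀, hh₀⟩ := hne
  have h0H : (0:G) ∈ H := by
    have := hHadd h₀ hh₀ (-h₀) (hHneg h₀ hh₀)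
    rwa [Gyrogroup.add_neg_cancel] at this
  -- right coset equals left coset : (·+b)''H = (b+·)''H
  have hcomm : ∀ b : G, (fun n => n + b) '' H = (fun n => b + n) '' H := by
    intro b
    have h1 := hinv1 (-b) b
    rw [Gyrogroup.neg_add_cancel] at h1
    ext z
    constructor
    · rintro ⟨n, hn, rfl⟩
      have : (-b) + (n + b) ∈ (fun n => (0:G) + n) '' H := by
        rw [← h1]; exact ⟨n, hn, rfl⟩
      obtain ⟨m, hm, hmz⟩ := this
      simp only [Gyrogroup.zero_add] at hmz
      exact ⟨m, hm, by simpa [hmz] using left_cancel' b (n + b)⟩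
    · rintro ⟨m, hm, rfl⟩
      have : (0:G) + m ∈ (fun n => -b + (n + b)) '' H := by
        rw [h1]; exact ⟨m, hm, rfl⟩
      obtain ⟨n, hn, hnz⟩ := this
      simp only [Gyrogroup.zero_add] at hnz
      refine ⟨n, hn, ?_⟩
      have := congrArg (fun z => b + z) hnz
      simpa [left_cancel' b (n + b)] using this
  -- h ⊕ H = H for h ∈ H
  have hcosetH : ∀ h ∈ H, (fun n => h + n) '' H = H := by
    intro h hh
    ext z
    constructor
    · rintro ⟨n, hn, rfl⟩; exact hHadd h hh n hn
    · intro hz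
      exact ⟨-h + z, hHadd (-h) (hHneg h hh) z hz, left_cancel' h z⟩
  -- coset of x + h equals coset of x
  have hcosetAdd : ∀ (x : G), ∀ h ∈ H, leftAddCoset (x + h) H = leftAddCoset x H := by
    intro x h hh
    have h1 := (hinv1 x h).symm
    unfold leftAddCoset
    rw [h1]
    have : (fun n => x + (n + h)) '' H = (fun n : G => x + n) '' ((fun n => n + h) '' H) := by
      rw [Set.image_image]
    rw [this, hcomm h, hcosetH h hh]
  have hcosetSelf : ∀ x : G, x ∈ leftAddCoset x H :=
    fun x => ⟨0, h0H, Gyrogroup.add_zero x⟩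
  -- now topology
  rw [continuous_iff_continuousAt]
  intro a
  intro U' hU'
  simp only [Filter.mem_map]
  -- hU' : U' ∈ nhds (-a)
  -- Step 1 : pick V₂, V with (-a + V₂) + V ⊆ U'
  have c₁ : Continuous fun p : G × G => (-a + p.1) + p.2 :=
    hadd.comp ((hadd.comp (continuous_const.prodMk continuous_fst)).prodMk continuous_snd)
  have hU'0 : ((fun p : G × G => (-a + p.1) + p.2) ⁻¹' U') ∈ nhds ((0:G), (0:G)) := by
    apply c₁.continuousAt.preimage_mem_nhds
    simpa [Gyrogroup.add_zero] using hU'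
  obtain ⟨V₂, hV₂, V, hV, hVsub⟩ := mem_nhds_prod_iff.1 hU'0
  -- Step 2 : B' with B' ∩ H under neg ⊆ V
  have hHneg0 : ContinuousWithinAt (fun x : G => -x) H 0 := hHnegCont 0 h0H
  have hVpre : ((fun x : G => -x) ⁻¹' V) ∈ nhdsWithin (0:G) H := by
    apply hHneg0
    simpa [gyro_neg_zero] using hV
  obtain ⟨B', hB'open, hB'0, hB'sub⟩ := mem_nhdsWithin.1 hVpre
  -- Step 3 : B ∈ 𝒰 with B ⊆ B'
  obtain ⟨B, hB𝒰, hBB'⟩ := hbase.2 B' (hB'open.mem_nhds hB'0)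
  have hBnhds : B ∈ nhds (0:G) := hbase.1 B hB𝒰
  -- Step 4 : W ∋ a, V₃ ∋ 0 with W + (-a + V₃) ⊆ B
  have c₂ : Continuous fun p : G × G => p.1 + (-a + p.2) :=
    hadd.comp (continuous_fst.prodMk (hadd.comp (continuous_const.prodMk continuous_snd)))
  have hB0 : ((fun p : G × G => p.1 + (-a + p.2)) ⁻¹' B) ∈ nhds (a, (0:G)) := by
    apply c₂.continuousAt.preimage_mem_nhds
    simpa [Gyrogroup.add_zero, Gyrogroup.add_neg_cancel] using hBnhds
  obtain ⟨W, hW, V₃, hV₃, hWV₃⟩ := mem_nhds_prod_iff.1 hB0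
  -- Step 5 : open O ∋ 0 inside V₂ ∩ V₃
  set O : Set G := interior (V₂ ∩ V₃) with hOdef
  have hOopen : IsOpen O := isOpen_interior
  have h0O : (0:G) ∈ O := mem_interior_iff_mem_nhds.2 (Filter.inter_mem hV₂ hV₃)
  have hOV₂ : O ⊆ V₂ := fun z hz => (interior_subset hz).1
  have hOV₃ : O ⊆ V₃ := fun z hz => (interior_subset hz).2
  -- Step 6 : T and its saturation S
  set T : Set G := (fun z : G => -a + z) '' O with hTdef
  set S : Set G := ⋃ h ∈ H, (fun z : G => h + z) '' T with hSdef
  have hTopen : IsOpen T := isOpenMap_left hadd (-a) O hOopen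
  have hSopen : IsOpen S := isOpen_biUnion fun h _ => isOpenMap_left hadd h T hTopen
  have hTS : T ⊆ S := fun t ht => Set.mem_biUnion h0H ⟨t, ht, Gyrogroup.zero_add t⟩
  have hnegaS : -a ∈ S := hTS ⟨0, h0O, Gyrogroup.add_zero (-a)⟩
  -- membership in S characterised via cosets
  have hSmem : ∀ z : G, z ∈ S ↔ ∃ t ∈ T, leftAddCoset z H = leftAddCoset t H := by
    intro z
    constructor
    · intro hz
      obtain ⟨h, hh, t, ht, rfl⟩ := by
        simpa [hSdef, Set.mem_iUnion] using hz
      refine ⟨t, ht, ?_⟩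
      have : h + t ∈ (fun n => t + n) '' H := by
        rw [← hcomm t]; exact ⟨h, hh, rfl⟩
      obtain ⟨h', hh', hh'e⟩ := this
      rw [← hh'e]
      exact hcosetAdd t h' hh'
    · rintro ⟨t, ht, hct⟩
      have hz : z ∈ leftAddCoset t H := by rw [← hct]; exact hcosetSelf z
      have : z ∈ (fun n => n + t) '' H := by
        rw [hcomm t]; exact hz
      obtain ⟨h, hh, rfl⟩ := this
      exact Set.mem_biUnion hh ⟨t, ht, rfl⟩
  -- S is saturated
  have hSat : (Quotient.mk (cosetSetoid H)) ⁻¹' ((Quotient.mk (cosetSetoid H)) '' S) = S := by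
    ext z
    constructor
    · rintro ⟨s, hs, hzs⟩
      have hrel : leftAddCoset s H = leftAddCoset z H := Quotient.exact hzs
      obtain ⟨t, ht, hct⟩ := (hSmem s).1 hs
      exact (hSmem z).2 ⟨t, ht, hrel.symm.trans hct⟩
    · intro hz; exact ⟨z, hz, rfl⟩
  -- Step 7 : the image of S in the quotient is open
  set Q : Set (Quotient (cosetSetoid H)) := (Quotient.mk (cosetSetoid H)) '' S with hQdef
  have hQopen : IsOpen Q := by
    rw [isOpen_coinduced (f := Quotient.mk (cosetSetoid H))] at *
    · rw [hSat]; exact hSopen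
  -- Step 8
  set T' : Set (Quotient (cosetSetoid H)) := negQ ⁻¹' Q with hT'def
  have hT'open : IsOpen T' := hQopen.preimage hnegQCont
  have hπcont : Continuous (Quotient.mk (cosetSetoid H) : G → Quotient (cosetSetoid H)) :=
    continuous_quot_mk
  have haT' : a ∈ (Quotient.mk (cosetSetoid H)) ⁻¹' T' := by
    simp only [Set.mem_preimage, hT'def, hnegQ a]
    exact ⟨-a, hnegaS, rfl⟩
  -- Step 9 : the neighbourhood N of a
  set N : Set G := W ∩ (Quotient.mk (cosetSetoid H)) ⁻¹' T' with hNdef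
  have hNnhds : N ∈ nhds a :=
    Filter.inter_mem hW (((hT'open.preimage hπcont).mem_nhds haT'))
  -- Step 10 : N ⊆ preimage of U' under neg
  apply Filter.mem_of_superset hNnhds
  rintro x ⟨hxW, hxT'⟩
  -- π(-x) ∈ Q hence -x ∈ S
  have hmx : -x ∈ S := by
    rw [← hSat]
    have : negQ (Quotient.mk (cosetSetoid H) x) ∈ Q := hxT'
    rwa [hnegQ x] at this
  obtain ⟨t, ht, hct⟩ := (hSmem (-x)).1 hmx
  obtain ⟨v, hvO, hvt⟩ := ht
  have hmxt : -x ∈ leftAddCoset t H := by rw [← hct]; exact hcosetSelf (-x)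
  obtain ⟨h, hh, hth⟩ := hmxt
  simp only at hth hvt
  -- h = -t + -x
  have hhe : h = -t + -x := by rw [← hth, left_cancel]
  -- -h = gyr (-t) (-x) (x + t)
  have hneg_h : -h = gyr (-t) (-x) (x + t) := by
    rw [hhe, gyro_neg_add_rev, gyro_neg_neg, gyro_neg_neg]
  -- x + t ∈ B
  have hxtB : x + t ∈ B := by
    rw [← hvt]
    exact hWV₃ (Set.mk_mem_prod hxW (hOV₃ hvO))
  -- so -h ∈ B by gyr-invariance
  have hnhB : -h ∈ B := by
    rw [hneg_h, ← hstrong B hB𝒰 (-t) (-x)]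
    exact ⟨x + t, hxtB, rfl⟩
  -- hence h ∈ V
  have hhV : h ∈ V := by
    have : -h ∈ B' ∩ H := ⟨hBB' hnhB, hHneg h hh⟩
    have := hB'sub this
    simpa [gyro_neg_neg] using this
  -- conclude
  have : -x = (-a + v) + h := by rw [← hth, hvt]
  rw [Set.mem_preimage, this]
  exact hVsub (Set.mk_mem_prod (hOV₂ hvO) hhV)
end

section
/- If a strongly paratopological gyrogroup G is (homeomorphic to) a dense Gδ-subset of a regular feebly compact space X, then G is a strongly topological gyrogroup, i.e., the inversion map of G is continuous. -/
open Gyrogroup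

/-- A space is feebly compact if every locally finite family of nonempty open sets is
finite. -/
def FeeblyCompact (X : Type*) [TopologicalSpace X] : Prop :=
  ∀ F : Set (Set X), (∀ U ∈ F, IsOpen U ∧ U.Nonempty) →
    LocallyFinite (fun U : F => (U : Set X)) → F.Finite

namespace GyroProofAux

/-! ### Pure gyrogroup algebra -/

section GyroAlgebra
variable {G : Type*} [Gyrogroup G]

theorem gadd_left_cancel {a x y : G} (h : a + x = a + y) : x = y := by
  have h1 : ∀ z : G, -a + (a + z) = gyr (-a) a z := fun z => by
    rw [Gyrogroup.add_gyr_assoc, Gyrogroup.neg_add_cancel, Gyrogroup.zero_add]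
  have h2 : gyr (-a) a x = gyr (-a) a y := by rw [← h1, ← h1, h]
  exact (Gyrogroup.gyr_bijective (-a) a).injective h2

theorem gyr_zero_left' (b z : G) : gyr (0 : G) b z = z := by
  have h := Gyrogroup.add_gyr_assoc (0 : G) b z
  rw [Gyrogroup.zero_add, Gyrogroup.zero_add] at h
  exact (gadd_left_cancel h).symm

theorem gyr_neg_aa (a z : G) : gyr (-a) a z = z := by
  have h := Gyrogroup.gyr_left_loop (-a) a
  rw [Gyrogroup.neg_add_cancel] at h
  rw [← h]; exact gyr_zero_left' a z

theorem gyr_a_neg (a z : G) : gyr a (-a) z = z := by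
  have h := Gyrogroup.gyr_left_loop a (-a)
  rw [Gyrogroup.add_neg_cancel] at h
  rw [← h]; exact gyr_zero_left' (-a) z

theorem neg_add_cancel_left' (a x : G) : -a + (a + x) = x := by
  rw [Gyrogroup.add_gyr_assoc, Gyrogroup.neg_add_cancel, Gyrogroup.zero_add]
  exact gyr_neg_aa a x

theorem add_neg_cancel_left' (a x : G) : a + (-a + x) = x := by
  rw [Gyrogroup.add_gyr_assoc, Gyrogroup.add_neg_cancel, Gyrogroup.zero_add]
  exact gyr_a_neg a x

theorem neg_eq_of_add' {a b : G} (h : a + b = 0) : b = -a := by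
  have h2 := neg_add_cancel_left' a b
  rw [h, Gyrogroup.add_zero] at h2
  exact h2.symm

theorem neg_neg' (a : G) : -(-a) = a :=
  (neg_eq_of_add' (Gyrogroup.neg_add_cancel a)).symm

theorem gyro_neg_add (p q : G) : -(p + q) = gyr p q (-q + -p) := by
  have h : (p + q) + gyr p q (-q + -p) = 0 := by
    rw [← Gyrogroup.add_gyr_assoc, add_neg_cancel_left' q (-p), Gyrogroup.add_neg_cancel]
  exact (neg_eq_of_add' h).symm

theorem shift_eq (g v : G) : (g + v) + gyr g v (-v) = g := by
  rw [← Gyrogroup.add_gyr_assoc, Gyrogroup.add_neg_cancel, Gyrogroup.add_zero]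

end GyroAlgebra

/-! ### Topological helpers -/

section GyroTopo
variable {G : Type*} [Gyrogroup G] [TopologicalSpace G]

theorem contL (hadd : Continuous fun p : G × G => p.1 + p.2) (a : G) :
    Continuous fun x : G => a + x :=
  hadd.comp (continuous_const.prodMk continuous_id)

/-- Left translation as a homeomorphism. -/
def leftHomeo (hadd : Continuous fun p : G × G => p.1 + p.2) (a : G) : G ≃ₜ G where
  toFun x := a + x
  invFun x := -a + x
  left_inv x := neg_add_cancel_left' a x
  right_inv x := add_neg_cancel_left' a x
  continuous_toFun := contL hadd a
  continuous_invFun := contL hadd (-a)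

/-- Left translate of a set. -/
def gball (a : G) (S : Set G) : Set G := (fun x : G => a + x) '' S

theorem isOpen_gball (hadd : Continuous fun p : G × G => p.1 + p.2) {S : Set G}
    (hS : IsOpen S) (a : G) : IsOpen (gball a S) :=
  (leftHomeo hadd a).isOpenMap S hS

theorem gball_closure (hadd : Continuous fun p : G × G => p.1 + p.2) (a : G) (S : Set G) :
    closure (gball a S) = gball a (closure S) :=
  ((leftHomeo hadd a).image_closure S).symm

omit [TopologicalSpace G] in
theorem self_mem_gball {S : Set G} (h0 : (0 : G) ∈ S) (a : G) : a ∈ gball a S :=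
  ⟨0, h0, Gyrogroup.add_zero a⟩

/-- STEP II: if inversion is continuous at 0, it is continuous everywhere. -/
theorem cont_of_contAt0 (hadd : Continuous fun p : G × G => p.1 + p.2)
    (𝒰 : Set (Set G)) (hbase : IsNhdsBasisAt (0 : G) 𝒰) (hstrong : GyrInvariantBase 𝒰)
    (H0 : Filter.Tendsto (fun x : G => -x) (nhds 0) (nhds 0)) :
    Continuous fun x : G => -x := by
  rw [continuous_iff_continuousAt]
  intro a
  show Filter.Tendsto (fun x : G => -x) (nhds a) (nhds (-a))
  have hcoe : ⇑(leftHomeo hadd a) = fun v : G => a + v := rfl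
  have hmap : Filter.map (fun v : G => a + v) (nhds (0 : G)) = nhds a := by
    have h := (leftHomeo hadd a).map_nhds_eq (0 : G)
    simpa only [hcoe, Gyrogroup.add_zero] using h
  rw [← hmap, Filter.tendsto_map'_iff]
  have hχ : Filter.Tendsto (fun v : G => a + -(a + v)) (nhds (0 : G)) (nhds (0 : G)) := by
    rw [Filter.tendsto_def]
    intro U hU
    have hU' : (fun x : G => -x) ⁻¹' U ∈ nhds (0 : G) := Filter.tendsto_def.mp H0 U hU
    obtain ⟨U'', hU''mem, hU''sub⟩ := hbase.2 _ hU'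
    have hχt : Continuous fun v : G => (a + v) + -a :=
      hadd.comp ((contL hadd a).prodMk continuous_const)
    have hV : (fun v : G => (a + v) + -a) ⁻¹' U'' ∈ nhds (0 : G) := by
      have ht := hχt.tendsto (0 : G)
      have h0 : ((a + (0 : G)) + -a) = (0 : G) := by
        rw [Gyrogroup.add_zero, Gyrogroup.add_neg_cancel]
      rw [h0] at ht
      exact Filter.tendsto_def.mp ht _ (hbase.1 _ hU''mem)
    apply Filter.mem_of_superset hV
    intro v hv
    have hv' : (a + v) + -a ∈ U'' := hv
    have hkey : -(a + -(a + v)) = gyr a (-(a + v)) ((a + v) + -a) :=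
      (gyro_neg_add a (-(a + v))).trans (by rw [neg_neg'])
    have hmem : -(a + -(a + v)) ∈ U'' := by
      rw [hkey, ← hstrong U'' hU''mem a (-(a + v))]
      exact Set.mem_image_of_mem _ hv'
    have h2 := hU''sub hmem
    rw [Set.mem_preimage, neg_neg'] at h2
    exact h2
  have hcomp : ((fun x : G => -x) ∘ fun v : G => a + v)
      = (fun w : G => -a + w) ∘ (fun v : G => a + -(a + v)) := by
    funext v
    simp only [Function.comp]
    exact (neg_add_cancel_left' a (-(a + v))).symm
  rw [hcomp]
  have hL : Filter.Tendsto (fun w : G => -a + w) (nhds (0 : G)) (nhds (-a)) := by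
    have h := (leftHomeo hadd (-a)).continuous.tendsto (0 : G)
    simpa only [show ⇑(leftHomeo hadd (-a)) = fun w : G => -a + w from rfl,
      Gyrogroup.add_zero] using h
  exact hL.comp hχ

end GyroTopo

/-- The state type for the recursive construction: a point `g` of `G` together with an
open set `C` of `X` around `e g`, and an auxiliary open set. -/
def StT {G X : Type*} [TopologicalSpace X] (e : G → X) : Type _ :=
  {t : G × Set X × Set X // IsOpen t.2.1 ∧ e t.1 ∈ t.2.1}

end GyroProofAux

open GyroProofAux

/-- If a strongly paratopological gyrogroup `G` embeds as a dense Gδ-subset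
of a regular feebly compact space `X`, then the inversion of `G` is continuous. -/
theorem strongly_paratopological_gyrogroup_dense_Gdelta_in_regular_feebly_compact
    {G : Type*} {X : Type*} [Gyrogroup G] [TopologicalSpace G] [TopologicalSpace X]
    [RegularSpace X]
    (hadd : Continuous fun p : G × G => p.1 + p.2)
    (𝒰 : Set (Set G)) (hbase : IsNhdsBasisAt (0 : G) 𝒰) (hstrong : GyrInvariantBase 𝒰)
    (hX : FeeblyCompact X)
    (e : G → X) (he : Topology.IsEmbedding e) (hdense : DenseRange e)
    (hGδ : IsGδ (Set.range e)) :
    Continuous fun x : G => -x := by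
  classical
  -- G-open sets are traces of X-open sets
  have htr : ∀ {U : Set G}, IsOpen U → ∃ Y : Set X, IsOpen Y ∧ e ⁻¹' Y = U := by
    intro U hU
    exact he.toIsInducing.isOpen_iff.mp hU
  -- regular shrinking in X
  have regshrink : ∀ {O : Set X} {x : X}, IsOpen O → x ∈ O →
      ∃ N : Set X, IsOpen N ∧ x ∈ N ∧ closure N ⊆ O := by
    intro O x hO hx
    obtain ⟨t, htn, htc, hts⟩ := exists_mem_nhds_isClosed_subset (hO.mem_nhds hx)
    exact ⟨interior t, isOpen_interior, mem_interior_iff_mem_nhds.mpr htn,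
      (closure_minimal interior_subset htc).trans hts⟩
  -- a countable family of open sets with intersection `range e`
  obtain ⟨W, hWopen, hWeq⟩ : ∃ W : ℕ → Set X, (∀ n, IsOpen (W n)) ∧ (⋂ n, W n) = Set.range e := by
    obtain ⟨T, hTopen, hTcount, hTeq⟩ := hGδ
    rcases Set.eq_empty_or_nonempty T with hT | hT
    · refine ⟨fun _ => Set.univ, fun _ => isOpen_univ, ?_⟩
      rw [hTeq, hT]
      simp
    · obtain ⟨f, hf⟩ := hTcount.exists_eq_range hT
      refine ⟨f, fun n => hTopen _ (by rw [hf]; exact ⟨n, rfl⟩), ?_⟩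
      rw [hTeq, hf, Set.sInter_range]
  have hWrange : ∀ n, Set.range e ⊆ W n := by
    intro n
    rw [← hWeq]
    exact Set.iInter_subset W n
  -- STEP I: inversion is continuous at 0.
  have H0 : Filter.Tendsto (fun x : G => -x) (nhds 0) (nhds 0) := by
    rw [Filter.tendsto_def]
    by_contra hbad0
    push_neg at hbad0
    obtain ⟨U₀, hU₀, hU₀bad⟩ := hbad0
    have hbad : ∀ V ∈ nhds (0 : G), ∃ v ∈ V, -v ∉ U₀ := by
      intro V hV
      by_contra h
      push_neg at h
      exact hU₀bad (Filter.mem_of_superset hV fun v hv => h v hv)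
    -- fixed constants
    obtain ⟨U₂', hU₂'mem, hU₂'sub⟩ := hbase.2 U₀ hU₀
    have hU₂'nhds : U₂' ∈ nhds (0 : G) := hbase.1 _ hU₂'mem
    -- an open set U₂ ∋ 0 with closure U₂ ⊆ U₂' (using regularity of X)
    obtain ⟨Y₂, hY₂o, hY₂tr⟩ := htr (isOpen_interior (s := U₂'))
    have he0Y₂ : e 0 ∈ Y₂ := by
      have : (0 : G) ∈ e ⁻¹' Y₂ := by
        rw [hY₂tr]
        exact mem_interior_iff_mem_nhds.mpr hU₂'nhds
      exact this
    obtain ⟨N₂, hN₂o, heN₂, hN₂cl⟩ := regshrink hY₂o he0Y₂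
    set U₂ : Set G := e ⁻¹' N₂ with hU₂def
    have hU₂open : IsOpen U₂ := hN₂o.preimage he.continuous
    have hU₂0 : (0 : G) ∈ U₂ := heN₂
    have hclU₂sub : closure U₂ ⊆ U₂' := by
      intro x hx
      have h1 : x ∈ e ⁻¹' closure N₂ := he.continuous.closure_preimage_subset N₂ hx
      have h2 : e x ∈ Y₂ := hN₂cl h1
      have h3 : x ∈ interior U₂' := by rw [← hY₂tr]; exact h2
      exact interior_subset h3
    -- an open Q ∋ 0 with Q + Q ⊆ U₂
    obtain ⟨Q, hQopen, hQ0, hQQ⟩ :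
        ∃ Q : Set G, IsOpen Q ∧ (0 : G) ∈ Q ∧ ∀ q₁ ∈ Q, ∀ q₂ ∈ Q, q₁ + q₂ ∈ U₂ := by
      have h00 : (fun p : G × G => p.1 + p.2) ((0 : G), (0 : G)) = (0 : G) :=
        Gyrogroup.zero_add 0
      have hpre : (fun p : G × G => p.1 + p.2) ⁻¹' U₂ ∈ nhds ((0 : G), (0 : G)) := by
        apply hadd.continuousAt.preimage_mem_nhds
        have hpt : ((0 : G), (0 : G)).1 + ((0 : G), (0 : G)).2 = (0 : G) := Gyrogroup.zero_add 0
        rw [hpt]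
        exact hU₂open.mem_nhds hU₂0
      rw [nhds_prod_eq] at hpre
      obtain ⟨A, hA, B, hB, hAB⟩ := Filter.mem_prod_iff.mp hpre
      refine ⟨interior A ∩ interior B, (isOpen_interior.inter isOpen_interior),
        ⟨mem_interior_iff_mem_nhds.mpr hA, mem_interior_iff_mem_nhds.mpr hB⟩, ?_⟩
      intro q₁ hq₁ q₂ hq₂
      have : (q₁, q₂) ∈ A ×ˢ B := ⟨interior_subset hq₁.1, interior_subset hq₂.2⟩
      exact hAB this
    obtain ⟨U₄, hU₄mem, hU₄Q⟩ := hbase.2 Q (hQopen.mem_nhds hQ0)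
    have hU₄nhds : U₄ ∈ nhds (0 : G) := hbase.1 _ hU₄mem
    -- the inductive step
    have hstep' : ∀ (n : ℕ) (c : StT e), ∃ t : StT e,
        closure t.1.2.1 ⊆ c.1.2.1 ∧ closure t.1.2.1 ⊆ W n ∧
        e ⁻¹' t.1.2.1 ⊆ gball t.1.1 Q ∧
        IsOpen t.1.2.2 ∧ t.1.2.2.Nonempty ∧ closure t.1.2.2 ⊆ c.1.2.1 ∧
        e ⁻¹' t.1.2.2 ∩ closure (gball t.1.1 U₂) = ∅ := by
      rintro n ⟨⟨g0, C, Sd⟩, hCo, hg0⟩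
      dsimp only at hCo hg0 ⊢
      have hPo : IsOpen ((fun x : G => g0 + x) ⁻¹' (e ⁻¹' C)) :=
        (hCo.preimage he.continuous).preimage (contL hadd g0)
      have h0V : (0 : G) ∈ (fun x : G => g0 + x) ⁻¹' (e ⁻¹' C) := by
        show e (g0 + 0) ∈ C
        rw [Gyrogroup.add_zero]
        exact hg0
      obtain ⟨v, hvV, hvbad⟩ := hbad _ (hPo.mem_nhds h0V)
      have hg'C : e (g0 + v) ∈ C := hvV
      -- the witness point g0 avoids the closed left translate
      have hwit : g0 ∉ closure (gball (g0 + v) U₂) := by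
        intro hmem
        rw [gball_closure hadd] at hmem
        obtain ⟨c', hc', hcc⟩ := hmem
        have h2 : (g0 + v) + gyr g0 v (-v) = g0 := shift_eq g0 v
        have hceq : c' = gyr g0 v (-v) := gadd_left_cancel (hcc.trans h2.symm)
        have hmem2 : gyr g0 v (-v) ∈ U₂' := hclU₂sub (hceq ▸ hc')
        rw [← hstrong U₂' hU₂'mem g0 v] at hmem2
        obtain ⟨u', hu', huu⟩ := hmem2
        apply hvbad
        apply hU₂'sub
        have : u' = -v := (Gyrogroup.gyr_bijective g0 v).injective huu
        rwa [← this]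
      -- build C' around e (g0 + v)
      obtain ⟨Y', hY'o, hY'tr⟩ := htr (isOpen_gball hadd hQopen (g0 + v))
      have hgY' : e (g0 + v) ∈ Y' := by
        have : (g0 + v) ∈ e ⁻¹' Y' := by
          rw [hY'tr]
          exact self_mem_gball hQ0 (g0 + v)
        exact this
      have hgO : e (g0 + v) ∈ C ∩ (W n ∩ Y') :=
        ⟨hg'C, hWrange n ⟨g0 + v, rfl⟩, hgY'⟩
      obtain ⟨C', hC'o, hgC', hC'cl⟩ := regshrink (hCo.inter ((hWopen n).inter hY'o)) hgO
      -- build S' around e g0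
      obtain ⟨Z', hZ'o, hZ'tr⟩ := htr (isClosed_closure (s := gball (g0 + v) U₂)).isOpen_compl
      have hg0Z : e g0 ∈ Z' := by
        have : g0 ∈ e ⁻¹' Z' := by
          rw [hZ'tr]
          exact hwit
        exact this
      have hg0O : e g0 ∈ C ∩ (W n ∩ Z') := ⟨hg0, hWrange n ⟨g0, rfl⟩, hg0Z⟩
      obtain ⟨S', hS'o, hg0S', hS'cl⟩ := regshrink (hCo.inter ((hWopen n).inter hZ'o)) hg0O
      refine ⟨⟨(g0 + v, C', S'), hC'o, hgC'⟩, ?_, ?_, ?_, ?_, ?_, ?_, ?_⟩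
      · exact hC'cl.trans Set.inter_subset_left
      · exact hC'cl.trans (Set.inter_subset_right.trans Set.inter_subset_left)
      · intro x hx
        have hCY : C' ⊆ Y' := fun y hy => (hC'cl (subset_closure hy)).2.2
        have : x ∈ e ⁻¹' Y' := hCY hx
        rwa [hY'tr] at this
      · exact hS'o
      · exact ⟨e g0, hg0S'⟩
      · exact hS'cl.trans Set.inter_subset_left
      · apply Set.eq_empty_iff_forall_notMem.mpr
        rintro x ⟨hx1, hx2⟩
        have hSZ : S' ⊆ Z' := fun y hy => (hS'cl (subset_closure hy)).2.2
        have : x ∈ e ⁻¹' Z' := hSZ hx1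
        rw [hZ'tr] at this
        exact this hx2
    choose step hst1 hst2 hst3 hst4 hst5 hst6 hst7 using hstep'
    -- the recursive sequence of stages
    have init : StT e := ⟨((0 : G), Set.univ, Set.univ), isOpen_univ, Set.mem_univ _⟩
    obtain ⟨F, hF0, hFs⟩ : ∃ F : ℕ → StT e, F 0 = step 0 init ∧
        ∀ n, F (n + 1) = step (n + 1) (F n) :=
      ⟨fun n => Nat.rec (motive := fun _ => StT e) (step 0 init)
        (fun m prev => step (m + 1) prev) n, rfl, fun _ => rfl⟩
    -- per-stage properties
    have hCW : ∀ n, closure (F n).1.2.1 ⊆ W n := by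
      intro n
      cases n with
      | zero => rw [hF0]; exact hst2 0 init
      | succ m => rw [hFs m]; exact hst2 (m + 1) (F m)
    have hCQ : ∀ n, e ⁻¹' (F n).1.2.1 ⊆ gball (F n).1.1 Q := by
      intro n
      cases n with
      | zero => rw [hF0]; exact hst3 0 init
      | succ m => rw [hFs m]; exact hst3 (m + 1) (F m)
    have hSopen : ∀ n, IsOpen (F n).1.2.2 := by
      intro n
      cases n with
      | zero => rw [hF0]; exact hst4 0 init
      | succ m => rw [hFs m]; exact hst4 (m + 1) (F m)
    have hSne : ∀ n, (F n).1.2.2.Nonempty := by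
      intro n
      cases n with
      | zero => rw [hF0]; exact hst5 0 init
      | succ m => rw [hFs m]; exact hst5 (m + 1) (F m)
    have hSdis : ∀ n, e ⁻¹' (F n).1.2.2 ∩ closure (gball (F n).1.1 U₂) = ∅ := by
      intro n
      cases n with
      | zero => rw [hF0]; exact hst7 0 init
      | succ m => rw [hFs m]; exact hst7 (m + 1) (F m)
    have hCchain : ∀ n, closure (F (n + 1)).1.2.1 ⊆ (F n).1.2.1 := by
      intro n
      rw [hFs n]
      exact hst1 (n + 1) (F n)
    have hSchain : ∀ n, closure (F (n + 1)).1.2.2 ⊆ (F n).1.2.1 := by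
      intro n
      rw [hFs n]
      exact hst6 (n + 1) (F n)
    have hCmono : ∀ k n, k ≤ n → (F n).1.2.1 ⊆ (F k).1.2.1 := by
      intro k n hkn
      induction hkn with
      | refl => exact subset_rfl
      | @step m _ ih => exact (subset_closure.trans (hCchain m)).trans ih
    -- the secondary family
    set Sq : ℕ → Set X := fun n => (F n).1.2.2 with hSqdef
    -- cluster point of the family {Sq n}
    have hcluster : ∃ z : X, ∀ N ∈ nhds z, {n : ℕ | (N ∩ Sq n).Nonempty}.Infinite := by
      by_contra hno
      push_neg at hno
      have h' : ∀ z : X, ∃ N, N ∈ nhds z ∧ {n : ℕ | (N ∩ Sq n).Nonempty}.Finite := by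
        intro z
        obtain ⟨N, hN1, hN2⟩ := hno z
        exact ⟨N, hN1, hN2⟩
      choose N hNn hNf using h'
      set Fam : Set (Set X) := {s | ∃ n, Sq n = s} with hFamdef
      have hFamprops : ∀ U ∈ Fam, IsOpen U ∧ U.Nonempty := by
        rintro U ⟨n, rfl⟩
        exact ⟨hSopen n, hSne n⟩
      have hLF : LocallyFinite (fun U : Fam => (U : Set X)) := by
        intro z
        refine ⟨N z, hNn z, ?_⟩
        have hsub : {U : Fam | ((U : Set X) ∩ N z).Nonempty} ⊆
            (fun n : ℕ => (⟨Sq n, ⟨n, rfl⟩⟩ : Fam)) '' {n : ℕ | (N z ∩ Sq n).Nonempty} := by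
          rintro ⟨U, n, rfl⟩ hU
          have hU' : (Sq n ∩ N z).Nonempty := hU
          exact ⟨n, by rwa [Set.inter_comm] at hU', rfl⟩
        exact ((hNf z).image _).subset hsub
      have hFamFin : Fam.Finite := hX Fam hFamprops hLF
      have hfib : ∃ s ∈ Fam, {n : ℕ | Sq n = s}.Infinite := by
        by_contra hf
        push_neg at hf
        have hsubU : (Set.univ : Set ℕ) ⊆ ⋃ s ∈ Fam, {n : ℕ | Sq n = s} := by
          intro n _
          exact Set.mem_biUnion ⟨n, rfl⟩ rfl
        have : (Set.univ : Set ℕ).Finite :=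
          (hFamFin.biUnion fun s hs => (hf s hs)).subset hsubU
        exact Set.infinite_univ this
      obtain ⟨s, ⟨n₀, hn₀⟩, hsInf⟩ := hfib
      obtain ⟨x₀, hx₀⟩ := hSne n₀
      have : {n : ℕ | (N x₀ ∩ Sq n).Nonempty}.Infinite := by
        apply hsInf.mono
        intro n hn
        refine ⟨x₀, mem_of_mem_nhds (hNn x₀), ?_⟩
        show x₀ ∈ Sq n
        rw [hn, ← hn₀]
        exact hx₀
      exact this (hNf x₀)
    obtain ⟨z, hz⟩ := hcluster
    -- the cluster point lies in every stage set, hence in range e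
    have hzC : ∀ k, z ∈ closure (F k).1.2.1 := by
      intro k
      rw [mem_closure_iff]
      intro o ho hzo
      obtain ⟨m, hm, hkm⟩ := (hz o (ho.mem_nhds hzo)).exists_gt k
      obtain ⟨x, hxo, hxS⟩ := hm
      refine ⟨x, hxo, ?_⟩
      cases m with
      | zero => omega
      | succ m' =>
        have h1 : Sq (m' + 1) ⊆ (F m').1.2.1 := subset_closure.trans (hSchain m')
        exact hCmono k m' (Nat.lt_succ_iff.mp hkm) (h1 hxS)
    have hzW : ∀ n, z ∈ W n := fun n => hCW n (hzC n)
    have hzrange : z ∈ Set.range e := by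
      rw [← hWeq]
      exact Set.mem_iInter.mpr hzW
    obtain ⟨ζ, hζ⟩ := hzrange
    have hzCmem : ∀ k, z ∈ (F k).1.2.1 := fun k => hCchain k (hzC (k + 1))
    have hζQ : ∀ k, ζ ∈ gball (F k).1.1 Q := by
      intro k
      apply hCQ k
      show e ζ ∈ (F k).1.2.1
      rw [hζ]
      exact hzCmem k
    -- the small left translate around ζ
    have h0intU₄ : (0 : G) ∈ interior U₄ := mem_interior_iff_mem_nhds.mpr hU₄nhds
    have hTsub : ∀ m, gball ζ (interior U₄) ⊆ gball (F m).1.1 U₂ := by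
      intro m t ht
      obtain ⟨s, hs, rfl⟩ := ht
      obtain ⟨u, hu, hζu0⟩ := hζQ m
      have hζu : (F m).1.1 + u = ζ := hζu0
      have hs4 : s ∈ U₄ := interior_subset hs
      have hs' : s ∈ gyr (F m).1.1 u '' U₄ := by
        rw [hstrong U₄ hU₄mem]
        exact hs4
      obtain ⟨w, hw, hws⟩ := hs'
      refine ⟨u + w, hQQ u hu w (hU₄Q hw), ?_⟩
      show (F m).1.1 + (u + w) = ζ + s
      rw [Gyrogroup.add_gyr_assoc, hws, hζu]
    obtain ⟨TX, hTXo, hTXtr⟩ := htr (isOpen_gball hadd isOpen_interior ζ)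
    have hzTX : z ∈ TX := by
      rw [← hζ]
      have : ζ ∈ e ⁻¹' TX := by
        rw [hTXtr]
        exact self_mem_gball h0intU₄ ζ
      exact this
    obtain ⟨m, hm⟩ := (hz TX (hTXo.mem_nhds hzTX)).nonempty
    obtain ⟨y, hy⟩ := hdense.exists_mem_open (hTXo.inter (hSopen m)) hm
    have hy1 : y ∈ gball ζ (interior U₄) := by
      rw [← hTXtr]
      exact hy.1
    have hy2 : y ∈ e ⁻¹' (F m).1.2.2 := hy.2
    have hcontra : y ∈ e ⁻¹' (F m).1.2.2 ∩ closure (gball (F m).1.1 U₂) :=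
      ⟨hy2, subset_closure (hTsub m hy1)⟩
    rw [hSdis m] at hcontra
    exact hcontra
  -- STEP II
  exact cont_of_contAt0 hadd 𝒰 hbase hstrong H0
end

section
/- If a strongly paratopological gyrogroup G is Hausdorff, countably compact, and topologically periodic, then G is a strongly topological gyrogroup, i.e., the inversion map x ↦ ⊖x is continuous. -/
open Gyrogroup

/-- A space is countably compact if every countable open cover has a finite subcover. -/
def CountablyCompact (X : Type*) [TopologicalSpace X] : Prop :=
  ∀ 𝒞 : Set (Set X), 𝒞.Countable → (∀ U ∈ 𝒞, IsOpen U) → ⋃₀ 𝒞 = Set.univ →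
    ∃ 𝒟 ⊆ 𝒞, 𝒟.Finite ∧ ⋃₀ 𝒟 = Set.univ

/-- `n·x = x ⊕ x ⊕ ⋯ ⊕ x` (`n` summands, left-associated). -/
def nAdd {G : Type*} [Gyrogroup G] : ℕ → G → G
  | 0, _ => 0
  | n + 1, x => nAdd n x + x

/-- A paratopological gyrogroup is topologically periodic if for each `x` and every
neighborhood `U` of the identity there is a positive integer `n` with `n·x ∈ U`. -/
def TopologicallyPeriodic (G : Type*) [Gyrogroup G] [TopologicalSpace G] : Prop :=
  ∀ x : G, ∀ U ∈ nhds (0 : G), ∃ n : ℕ, 0 < n ∧ nAdd n x ∈ U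

section GyroAux

variable {G : Type*} [Gyrogroup G]

lemma gg_cancel {a b c : G} (h : a + b = a + c) : b = c := by
  have h1 : ∀ z : G, -a + (a + z) = gyr (-a) a z := by
    intro z
    rw [Gyrogroup.add_gyr_assoc, Gyrogroup.neg_add_cancel, Gyrogroup.zero_add]
  have h2 : gyr (-a) a b = gyr (-a) a c := by
    rw [← h1, ← h1, h]
  exact (Gyrogroup.gyr_bijective (-a) a).1 h2

lemma gg_gyr_zero_left (a z : G) : gyr (0 : G) a z = z := by
  have h := Gyrogroup.add_gyr_assoc (0 : G) a z
  rw [Gyrogroup.zero_add, Gyrogroup.zero_add] at h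
  exact (gg_cancel h).symm

lemma gg_gyr_neg_add (a z : G) : gyr (-a) a z = z := by
  have h := Gyrogroup.gyr_left_loop (-a) a
  rw [Gyrogroup.neg_add_cancel] at h
  rw [← h]
  exact gg_gyr_zero_left a z

lemma gg_gyr_add_neg (a z : G) : gyr a (-a) z = z := by
  have h := Gyrogroup.gyr_left_loop a (-a)
  rw [Gyrogroup.add_neg_cancel] at h
  rw [← h]
  exact gg_gyr_zero_left (-a) z

lemma gg_neg_add_cancel_left (a b : G) : -a + (a + b) = b := by
  rw [Gyrogroup.add_gyr_assoc, Gyrogroup.neg_add_cancel, Gyrogroup.zero_add]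
  exact gg_gyr_neg_add a b

lemma gg_add_neg_cancel_left (a b : G) : a + (-a + b) = b := by
  rw [Gyrogroup.add_gyr_assoc, Gyrogroup.add_neg_cancel, Gyrogroup.zero_add]
  exact gg_gyr_add_neg a b

lemma gg_neg_unique {a b : G} (h : a + b = 0) : b = -a :=
  gg_cancel (h.trans (Gyrogroup.add_neg_cancel a).symm)

lemma gg_neg_neg (a : G) : -(-a) = a :=
  (gg_neg_unique (Gyrogroup.neg_add_cancel a)).symm

lemma gg_gyrosum_inv (a b : G) : -(a + b) = gyr a b (-b + -a) := by
  have h : (a + b) + gyr a b (-b + -a) = 0 := by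
    rw [← Gyrogroup.add_gyr_assoc, gg_add_neg_cancel_left]
    exact Gyrogroup.add_neg_cancel a
  exact (gg_neg_unique h).symm

lemma gg_gyr_nAdd (n : ℕ) (y z : G) : gyr (nAdd n y) y z = z := by
  induction n with
  | zero => exact gg_gyr_zero_left y z
  | succ n ih =>
    have h := Gyrogroup.gyr_left_loop (nAdd n y) y
    show gyr (nAdd n y + y) y z = z
    rw [h]
    exact ih

/-- right-associated repeated sum -/
def rAdd {G : Type*} [Gyrogroup G] : ℕ → G → G
  | 0, _ => 0
  | n + 1, x => x + rAdd n x

lemma gg_neg_zero : -(0 : G) = 0 :=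
  (gg_neg_unique (Gyrogroup.zero_add (0 : G))).symm

lemma gg_rAdd_zero (n : ℕ) : rAdd n (0 : G) = 0 := by
  induction n with
  | zero => rfl
  | succ n ih =>
    show (0 : G) + rAdd n (0 : G) = 0
    rw [ih, Gyrogroup.zero_add]

lemma gg_neg_nAdd (n : ℕ) (y : G) : -(nAdd n y) = rAdd n (-y) := by
  induction n with
  | zero => exact gg_neg_zero
  | succ n ih =>
    show -(nAdd n y + y) = -y + rAdd n (-y)
    rw [gg_gyrosum_inv, gg_gyr_nAdd, ih]

lemma gg_decomp (x : G) (n : ℕ) : -x = rAdd n x + nAdd (n + 1) (-x) := by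
  calc -x = -(nAdd n (-x)) + (nAdd n (-x) + -x) := (gg_neg_add_cancel_left _ _).symm
    _ = rAdd n x + nAdd (n + 1) (-x) := by
        rw [gg_neg_nAdd, gg_neg_neg]; rfl

variable [TopologicalSpace G]

lemma gg_cont_nAdd (hadd : Continuous fun p : G × G => p.1 + p.2) (n : ℕ) :
    Continuous fun x : G => nAdd n x := by
  induction n with
  | zero =>
    have e : (fun x : G => nAdd 0 x) = fun _ : G => (0 : G) := rfl
    rw [e]; exact continuous_const
  | succ n ih =>
    have e : (fun x : G => nAdd (n + 1) x) = fun x : G => nAdd n x + x := rfl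
    rw [e]
    exact hadd.comp (ih.prodMk continuous_id)

lemma gg_cont_rAdd (hadd : Continuous fun p : G × G => p.1 + p.2) (n : ℕ) :
    Continuous fun x : G => rAdd n x := by
  induction n with
  | zero =>
    have e : (fun x : G => rAdd 0 x) = fun _ : G => (0 : G) := rfl
    rw [e]; exact continuous_const
  | succ n ih =>
    have e : (fun x : G => rAdd (n + 1) x) = fun x : G => x + rAdd n x := rfl
    rw [e]
    exact hadd.comp (continuous_id.prodMk ih)

/-- Continuity of inversion at the identity. -/
lemma gg_inv_cont_at_zero (hadd : Continuous fun p : G × G => p.1 + p.2)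
    (hcc : CountablyCompact G) (hper : TopologicallyPeriodic G) :
    ∀ U ∈ nhds (0 : G), ∃ V ∈ nhds (0 : G), ∀ x ∈ V, -x ∈ U := by
  intro U hU
  -- obtain an open W ∋ 0 with W + W ⊆ U
  have h00 : (fun p : G × G => p.1 + p.2) ⁻¹' U ∈ nhds ((0 : G), (0 : G)) := by
    apply hadd.continuousAt.preimage_mem_nhds
    show U ∈ nhds ((0 : G) + 0)
    rw [Gyrogroup.zero_add]
    exact hU
  rw [mem_nhds_prod_iff] at h00
  obtain ⟨s, hs, t, ht, hst⟩ := h00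
  obtain ⟨W, hWsub, hWo, hW0⟩ := mem_nhds_iff.mp (Filter.inter_mem hs ht)
  have hWU : ∀ a ∈ W, ∀ b ∈ W, a + b ∈ U := by
    intro a ha b hb
    exact hst (Set.mk_mem_prod (hWsub ha).1 (hWsub hb).2)
  have hWnhds : W ∈ nhds (0 : G) := hWo.mem_nhds hW0
  -- countable open cover by periodicity
  set C : ℕ → Set G := fun n => (fun x : G => nAdd (n + 1) x) ⁻¹' W with hCdef
  have hCopen : ∀ n, IsOpen (C n) := fun n =>
    (gg_cont_nAdd hadd (n + 1)).isOpen_preimage W hWo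
  have hCcov : ⋃₀ Set.range C = Set.univ := by
    rw [Set.sUnion_range]
    ext x
    simp only [Set.mem_iUnion, Set.mem_univ, iff_true]
    obtain ⟨n, hn, hmem⟩ := hper x W hWnhds
    obtain ⟨m, rfl⟩ : ∃ m, n = m + 1 := ⟨n - 1, (Nat.succ_pred_eq_of_pos hn).symm⟩
    exact ⟨m, hmem⟩
  obtain ⟨𝒟, hDsub, hDfin, hDcov⟩ := hcc (Set.range C) (Set.countable_range C)
    (by rintro _ ⟨n, rfl⟩; exact hCopen n) hCcov
  have hsel : ∀ D ∈ 𝒟, ∃ n, C n = D := fun D hD => hDsub hD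
  choose! g hg using hsel
  have hTfin : (g '' 𝒟).Finite := hDfin.image g
  have hTcov : ∀ x : G, ∃ n ∈ g '' 𝒟, nAdd (n + 1) x ∈ W := by
    intro x
    have hx : x ∈ ⋃₀ 𝒟 := by rw [hDcov]; exact Set.mem_univ x
    obtain ⟨D, hD, hxD⟩ := hx
    refine ⟨g D, Set.mem_image_of_mem g hD, ?_⟩
    have hCg : C (g D) = D := hg D hD
    rw [← hCg] at hxD
    exact hxD
  -- the neighborhood V
  refine ⟨⋂ n ∈ g '' 𝒟, (fun x : G => rAdd n x) ⁻¹' W, ?_, ?_⟩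
  · rw [Filter.biInter_mem hTfin]
    intro n _
    apply (gg_cont_rAdd hadd n).continuousAt.preimage_mem_nhds
    show W ∈ nhds (rAdd n (0 : G))
    rw [gg_rAdd_zero]
    exact hWnhds
  · intro x hxV
    obtain ⟨n, hnT, hw⟩ := hTcov (-x)
    have hr : rAdd n x ∈ W := Set.mem_iInter₂.mp hxV n hnT
    rw [gg_decomp x n]
    exact hWU _ hr _ hw

end GyroAux


/-- A Hausdorff countably compact topologically periodic strongly
paratopological gyrogroup is a strongly topological gyrogroup, i.e., the inversion map is
continuous. -/
theorem hausdorff_countablyCompact_topologically_periodic_inv_continuous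
    {G : Type*} [Gyrogroup G] [TopologicalSpace G] [T2Space G]
    (hadd : Continuous fun p : G × G => p.1 + p.2)
    (𝒰 : Set (Set G)) (hbase : IsNhdsBasisAt (0 : G) 𝒰) (hstrong : GyrInvariantBase 𝒰)
    (hcc : CountablyCompact G) (hper : TopologicallyPeriodic G) :
    Continuous fun x : G => -x := by
  have T1 := gg_inv_cont_at_zero hadd hcc hper
  rw [continuous_iff_continuousAt]
  intro p
  have key : ∀ O ∈ nhds (-p), (fun x : G => -x) ⁻¹' O ∈ nhds p := by
    intro O hO
    have contLp : Continuous fun u : G => -p + u :=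
      hadd.comp (continuous_const.prodMk continuous_id)
    have hA : (fun u : G => -p + u) ⁻¹' O ∈ nhds (0 : G) := by
      apply contLp.continuousAt.preimage_mem_nhds
      show O ∈ nhds (-p + 0)
      rw [Gyrogroup.add_zero]
      exact hO
    obtain ⟨V₁, hV₁, hV₁neg⟩ := T1 _ hA
    obtain ⟨W, hWU, hWsub⟩ := hbase.2 V₁ hV₁
    have hWnhds : W ∈ nhds (0 : G) := hbase.1 W hWU
    have contRp : Continuous fun y : G => y + -p :=
      hadd.comp (continuous_id.prodMk continuous_const)
    have hB : (fun y : G => y + -p) ⁻¹' W ∈ nhds p := by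
      apply contRp.continuousAt.preimage_mem_nhds
      show W ∈ nhds (p + -p)
      rw [Gyrogroup.add_neg_cancel]
      exact hWnhds
    apply Filter.mem_of_superset hB
    intro y hy
    have hy' : y + -p ∈ W := hy
    have h2 : gyr p (-y) (y + -p) ∈ W := by
      have himg : gyr p (-y) (y + -p) ∈ gyr p (-y) '' W :=
        Set.mem_image_of_mem _ hy'
      rwa [hstrong W hWU p (-y)] at himg
    have h3 : -(p + -y) = gyr p (-y) (y + -p) := by
      rw [gg_gyrosum_inv, gg_neg_neg]
    have h5 : -(p + -y) ∈ V₁ := hWsub (by rw [h3]; exact h2)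
    have h6 : -(-(p + -y)) ∈ (fun u : G => -p + u) ⁻¹' O := hV₁neg _ h5
    rw [gg_neg_neg] at h6
    have h7 : -p + (p + -y) = -y := gg_neg_add_cancel_left p (-y)
    have h8 : -p + (p + -y) ∈ O := h6
    rw [h7] at h8
    exact h8
  exact Filter.tendsto_def.mpr key
end

section
/- Let (G, τ, ⊕) be a paratopological gyrogroup, F a compact subset of G, and O an open subset of G with F ⊆ O. Then there exists an open neighborhood V of the identity element 0 such that F⊕V ⊆ O and V⊕F ⊆ O, where A⊕B = {a⊕b : a ∈ A, b ∈ B}. -/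
open Gyrogroup

/-- In a paratopological gyrogroup, if `F` is compact, `O` is open and
`F ⊆ O`, then there is an open neighborhood `V` of `0` with `F⊕V ⊆ O` and `V⊕F ⊆ O`. -/
theorem compact_subset_open_exists_nbhd
    {G : Type*} [Gyrogroup G] [TopologicalSpace G]
    (hadd : Continuous fun p : G × G => p.1 + p.2)
    (F O : Set G) (hF : IsCompact F) (hO : IsOpen O) (hFO : F ⊆ O) :
    ∃ V : Set G, IsOpen V ∧ (0 : G) ∈ V ∧
      Set.image2 (fun a b => a + b) F V ⊆ O ∧ Set.image2 (fun a b => a + b) V F ⊆ O := by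
  have key : ∀ x ∈ F, ∃ u v u' v' : Set G, IsOpen u ∧ IsOpen v ∧ IsOpen u' ∧ IsOpen v' ∧
      x ∈ u ∧ (0:G) ∈ v ∧ (0:G) ∈ u' ∧ x ∈ v' ∧
      (∀ a ∈ u, ∀ b ∈ v, a + b ∈ O) ∧ (∀ a ∈ u', ∀ b ∈ v', a + b ∈ O) := by
    intro x hx
    have hS : IsOpen ((fun p : G × G => p.1 + p.2) ⁻¹' O) := hadd.isOpen_preimage O hO
    have h1 : ((x, (0:G)) : G × G) ∈ (fun p : G × G => p.1 + p.2) ⁻¹' O := by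
      simp only [Set.mem_preimage, Gyrogroup.add_zero]; exact hFO hx
    have h2 : (((0:G), x) : G × G) ∈ (fun p : G × G => p.1 + p.2) ⁻¹' O := by
      simp only [Set.mem_preimage, Gyrogroup.zero_add]; exact hFO hx
    obtain ⟨u, v, hu, hv, hxu, h0v, huv⟩ := isOpen_prod_iff.1 hS x 0 h1
    obtain ⟨u', v', hu', hv', h0u', hxv', huv'⟩ := isOpen_prod_iff.1 hS 0 x h2
    exact ⟨u, v, u', v', hu, hv, hu', hv', hxu, h0v, h0u', hxv',
      fun a ha b hb => huv (Set.mk_mem_prod ha hb), fun a ha b hb => huv' (Set.mk_mem_prod ha hb)⟩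
  choose! u v u' v' hu hv hu' hv' hxu h0v h0u' hxv' huv huv' using key
  have hcover : F ⊆ ⋃ x ∈ F, (u x ∩ v' x) := fun x hx =>
    Set.mem_biUnion hx ⟨hxu x hx, hxv' x hx⟩
  obtain ⟨t, htF, htfin, hsub⟩ := hF.elim_finite_subcover_image
    (fun x hx => (hu x hx).inter (hv' x hx)) hcover
  refine ⟨⋂ x ∈ t, (v x ∩ u' x), ?_, ?_, ?_, ?_⟩
  · exact htfin.isOpen_biInter fun x hx => (hv x (htF hx)).inter (hu' x (htF hx))
  · exact Set.mem_iInter₂.2 fun x hx => ⟨h0v x (htF hx), h0u' x (htF hx)⟩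
  · rintro _ ⟨a, ha, b, hb, rfl⟩
    obtain ⟨x, hxt, hax⟩ := Set.mem_iUnion₂.1 (hsub ha)
    exact huv x (htF hxt) a hax.1 b ((Set.mem_iInter₂.1 hb x hxt).1)
  · rintro _ ⟨b, hb, a, ha, rfl⟩
    obtain ⟨x, hxt, hax⟩ := Set.mem_iUnion₂.1 (hsub ha)
    exact huv' x (htF hxt) b ((Set.mem_iInter₂.1 hb x hxt).2) a hax.2
end
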